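/- Let q be a probability density on ℝ^d, r : ℝ^d → (0,∞) measurable with ∫ r q = 1 and p := r·q, and suppose r is twice continuously differentiable with sup_x ‖∇²r(x)‖_op ≤ κ → < ∞. Fix x⋆ ∈ ℝ^d and σ > 0, set k_σ(x) := exp(−‖x−x⋆‖²/(2σ²)) and x̃ := (x,1). Assume: (i) ∫ q(x⋆+σy) e^{−‖y‖²/2} ‖y‖² ‖(x⋆+σy, 1)‖ dy ≤ C_k; (ii) the smallest eigenvalue of ∫ q(x) k_σ(x) x̃ x̃ᵀ dx is at least σ^d Λ → > 0; (iii) all displayed integrals are finite. Define the quadratic objective ℓ_→(w,b) := −∫ p(x) k_σ(x)(⟨w,x⟩+b) dx + ∫ q(x) k_σ(x) ( (⟨w,x⟩+b)²/2 + ⟨w,x⟩+b ) dx. Then ℓ_→ has a unique global minimizer (w₀, b₀) over ℝ^{d+1}, and ‖w₀ − ∇r(x⋆)‖ ≤ κ_→ C_k σ² / Λ_→. -/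

import Mathlib

open MeasureTheory
open scoped RealInnerProductSpace

set_option maxHeartbeats 1000000 in
lemma taylor_aux {d : ℕ} (r : EuclideanSpace ℝ (Fin d) → ℝ) (hrC2 : ContDiff ℝ 2 r)
    (κ : ℝ) (hκ : ∀ x, ‖fderiv ℝ (gradient r) x‖ ≤ κ) (a x : EuclideanSpace ℝ (Fin d)) :
    |r x - r a - ⟪gradient r a, x - a⟫| ≤ κ * ‖x - a‖ ^ 2 := by
  have hκ0 : 0 ≤ κ := le_trans (norm_nonneg _) (hκ a)
  have hfd : Differentiable ℝ (fderiv ℝ r) :=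
    (hrC2.fderiv_right (m := 1) le_rfl).differentiable (by norm_num)
  have hgd : Differentiable ℝ (gradient r) :=
    ((InnerProductSpace.toDual ℝ (EuclideanSpace ℝ (Fin d))).symm.toContinuousLinearEquiv.toContinuousLinearMap.differentiable).comp hfd
  have hlip : ∀ z w : EuclideanSpace ℝ (Fin d),
      ‖gradient r z - gradient r w‖ ≤ κ * ‖z - w‖ := fun z w =>
    (convex_univ (𝕜 := ℝ)).norm_image_sub_le_of_norm_fderiv_le
      (fun y _ => hgd y) (fun y _ => hκ y) trivial trivial
  have hkey : ∀ z : EuclideanSpace ℝ (Fin d),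
      fderiv ℝ r z = InnerProductSpace.toDual ℝ _ (gradient r z) := fun z =>
    ((InnerProductSpace.toDual ℝ _).apply_symm_apply (fderiv ℝ r z)).symm
  have hfl : ∀ z : EuclideanSpace ℝ (Fin d), ‖fderiv ℝ r z - fderiv ℝ r a‖ ≤ κ * ‖z - a‖ := by
    intro z
    rw [hkey z, hkey a, ← map_sub, (InnerProductSpace.toDual ℝ _).norm_map]
    exact hlip z a
  have hmain := Convex.norm_image_sub_le_of_norm_fderiv_le'
    (f := r) (x := a) (y := x) (φ := fderiv ℝ r a) (s := Metric.closedBall a ‖x - a‖) (C := κ * ‖x - a‖)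
    (fun y _ => hrC2.differentiable (by norm_num) y)
    (fun y hy => le_trans (hfl y) (by
      have : ‖y - a‖ ≤ ‖x - a‖ := by simpa [dist_eq_norm] using hy
      nlinarith))
    (convex_closedBall a ‖x - a‖)
    (Metric.mem_closedBall_self (norm_nonneg _))
    (by simp [Metric.mem_closedBall, dist_eq_norm])
  have h2 : fderiv ℝ r a (x - a) = ⟪gradient r a, x - a⟫ := by
    rw [hkey a]; exact InnerProductSpace.toDual_apply_apply
  rw [h2] at hmain
  calc |r x - r a - ⟪gradient r a, x - a⟫| ≤ κ * ‖x - a‖ * ‖x - a‖ := by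
        simpa [Real.norm_eq_abs] using hmain
    _ = κ * ‖x - a‖ ^ 2 := by ring

set_option maxHeartbeats 2000000 in
/-- Population version of Corollary 1: the slope of the unique global minimizer of the
localized quadratic variational objective (for the forward-KL velocity field) estimates
`∇r(x⋆)` with bias at most `κ_→ C_k σ² / Λ_→`. -/
theorem stmt9 {d : ℕ}
    (q : EuclideanSpace ℝ (Fin d) → ℝ) (hq0 : ∀ x, 0 ≤ q x) (hq1 : ∫ x, q x = 1)
    (r : EuclideanSpace ℝ (Fin d) → ℝ) (hrm : Measurable r) (hrpos : ∀ x, 0 < r x)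
    (hr1 : ∫ x, r x * q x = 1)
    (p : EuclideanSpace ℝ (Fin d) → ℝ) (hp : ∀ x, p x = r x * q x)
    (hrC2 : ContDiff ℝ 2 r)
    (κ : ℝ) (hκ : ∀ x, ‖fderiv ℝ (gradient r) x‖ ≤ κ)
    (xstar : EuclideanSpace ℝ (Fin d)) (σ : ℝ) (hσ : 0 < σ)
    (k : EuclideanSpace ℝ (Fin d) → ℝ)
    (hk : ∀ x, k x = Real.exp (-‖x - xstar‖ ^ 2 / (2 * σ ^ 2)))
    (tilde : EuclideanSpace ℝ (Fin d) → WithLp 2 (EuclideanSpace ℝ (Fin d) × ℝ))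
    (htilde : ∀ x, tilde x = (WithLp.equiv 2 (EuclideanSpace ℝ (Fin d) × ℝ)).symm (x, 1))
    (Ck Λ : ℝ) (hΛ : 0 < Λ)
    -- (i) local moment bound
    (hmom : (∫ y : EuclideanSpace ℝ (Fin d),
        q (xstar + σ • y) * Real.exp (-‖y‖ ^ 2 / 2) * ‖y‖ ^ 2 * ‖tilde (xstar + σ • y)‖)
      ≤ Ck)
    -- (ii) smallest eigenvalue of `∫ q k x̃ x̃ᵀ` is at least `σ^d Λ`
    (heig : ∀ v : WithLp 2 (EuclideanSpace ℝ (Fin d) × ℝ),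
      σ ^ d * Λ * ‖v‖ ^ 2 ≤ ∫ x, q x * k x * ⟪v, tilde x⟫ ^ 2)
    -- (iii) all displayed integrals are finite
    (hImom : Integrable fun y : EuclideanSpace ℝ (Fin d) =>
      q (xstar + σ • y) * Real.exp (-‖y‖ ^ 2 / 2) * ‖y‖ ^ 2 * ‖tilde (xstar + σ • y)‖)
    (hIeig : ∀ v : WithLp 2 (EuclideanSpace ℝ (Fin d) × ℝ),
      Integrable fun x => q x * k x * ⟪v, tilde x⟫ ^ 2)
    (hIobj : ∀ (w : EuclideanSpace ℝ (Fin d)) (b : ℝ),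
      (Integrable fun x => p x * k x * (⟪w, x⟫ + b)) ∧
      (Integrable fun x => q x * k x * ((⟪w, x⟫ + b) ^ 2 / 2 + (⟪w, x⟫ + b))))
    (ℓ : WithLp 2 (EuclideanSpace ℝ (Fin d) × ℝ) → ℝ)
    (hℓ : ∀ (w : EuclideanSpace ℝ (Fin d)) (b : ℝ),
      ℓ ((WithLp.equiv 2 (EuclideanSpace ℝ (Fin d) × ℝ)).symm (w, b))
        = -(∫ x, p x * k x * (⟪w, x⟫ + b))
          + ∫ x, q x * k x * ((⟪w, x⟫ + b) ^ 2 / 2 + (⟪w, x⟫ + b))) :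
    ∃ θ₀ : WithLp 2 (EuclideanSpace ℝ (Fin d) × ℝ),
      (∀ θ, ℓ θ₀ ≤ ℓ θ) ∧
      (∀ θ', (∀ θ, ℓ θ' ≤ ℓ θ) → θ' = θ₀) ∧
      ‖((WithLp.equiv 2 (EuclideanSpace ℝ (Fin d) × ℝ)) θ₀).1 - gradient r xstar‖
        ≤ κ * Ck * σ ^ 2 / Λ := by
  have hsE : ∀ (θ : WithLp 2 (EuclideanSpace ℝ (Fin d) × ℝ)) (x : EuclideanSpace ℝ (Fin d)),
      ⟪θ, tilde x⟫ = ⟪θ.fst, x⟫ + θ.snd := by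
    intro θ x
    rw [htilde x, WithLp.prod_inner_apply]
    norm_num [RCLike.inner_apply]
  have hIqs : ∀ θ : WithLp 2 (EuclideanSpace ℝ (Fin d) × ℝ),
      Integrable fun x => q x * k x * ⟪θ, tilde x⟫ := by
    intro θ
    refine (((hIobj θ.fst θ.snd).2).sub ((hIeig θ).const_mul (1/2))).congr
      (Filter.Eventually.of_forall fun x => ?_)
    simp only [Pi.sub_apply, hsE]; ring
  have hIps : ∀ θ : WithLp 2 (EuclideanSpace ℝ (Fin d) × ℝ),
      Integrable fun x => p x * k x * ⟪θ, tilde x⟫ := by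
    intro θ
    refine ((hIobj θ.fst θ.snd).1).congr (Filter.Eventually.of_forall fun x => ?_)
    simp only [hsE]
  have hIprod : ∀ θ η : WithLp 2 (EuclideanSpace ℝ (Fin d) × ℝ),
      Integrable fun x => q x * k x * (⟪θ, tilde x⟫ * ⟪η, tilde x⟫) := by
    intro θ η
    refine (((hIeig (θ+η)).sub ((hIeig θ).add (hIeig η))).const_mul (1/2)).congr
      (Filter.Eventually.of_forall fun x => ?_)
    simp only [Pi.sub_apply, Pi.add_apply, inner_add_left]; ring
  have hIL : ∀ η : WithLp 2 (EuclideanSpace ℝ (Fin d) × ℝ),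
      Integrable fun x => (p x - q x) * k x * ⟪η, tilde x⟫ := fun η =>
    ((hIps η).sub (hIqs η)).congr (Filter.Eventually.of_forall fun x => by
      simp only [Pi.sub_apply]; ring)
  have hQaddl : ∀ a b c : WithLp 2 (EuclideanSpace ℝ (Fin d) × ℝ),
      (∫ x, q x * k x * (⟪a + b, tilde x⟫ * ⟪c, tilde x⟫))
        = (∫ x, q x * k x * (⟪a, tilde x⟫ * ⟪c, tilde x⟫))
          + ∫ x, q x * k x * (⟪b, tilde x⟫ * ⟪c, tilde x⟫) := by
    intro a b c
    rw [← integral_add (hIprod a c) (hIprod b c)]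
    refine integral_congr_ae (Filter.Eventually.of_forall fun x => ?_)
    simp only [Pi.add_apply, inner_add_left]; ring
  have hQsmull : ∀ (c : ℝ) (a b : WithLp 2 (EuclideanSpace ℝ (Fin d) × ℝ)),
      (∫ x, q x * k x * (⟪c • a, tilde x⟫ * ⟪b, tilde x⟫))
        = c * ∫ x, q x * k x * (⟪a, tilde x⟫ * ⟪b, tilde x⟫) := by
    intro c a b
    rw [← integral_const_mul]
    refine integral_congr_ae (Filter.Eventually.of_forall fun x => ?_)
    simp only [real_inner_smul_left]; ring
  have hQsym : ∀ a b : WithLp 2 (EuclideanSpace ℝ (Fin d) × ℝ),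
      (∫ x, q x * k x * (⟪a, tilde x⟫ * ⟪b, tilde x⟫))
        = ∫ x, q x * k x * (⟪b, tilde x⟫ * ⟪a, tilde x⟫) := by
    intro a b
    refine integral_congr_ae (Filter.Eventually.of_forall fun x => ?_)
    ring
  obtain ⟨Q, hQ⟩ : ∃ Q : WithLp 2 (EuclideanSpace ℝ (Fin d) × ℝ) →ₗ[ℝ]
      WithLp 2 (EuclideanSpace ℝ (Fin d) × ℝ) →ₗ[ℝ] ℝ, ∀ θ η, Q θ η
        = ∫ x, q x * k x * (⟪θ, tilde x⟫ * ⟪η, tilde x⟫) := by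
    refine ⟨LinearMap.mk₂ ℝ (fun θ η => ∫ x, q x * k x * (⟪θ, tilde x⟫ * ⟪η, tilde x⟫))
      hQaddl hQsmull (fun a b c => ?_) (fun c a b => ?_), fun θ η => rfl⟩
    · beta_reduce
      rw [hQsym a (b + c), hQaddl b c a, hQsym b a, hQsym c a]
    · beta_reduce
      rw [hQsym a (c • b), hQsmull c b a, hQsym b a, smul_eq_mul]
  have hLadd : ∀ a b : WithLp 2 (EuclideanSpace ℝ (Fin d) × ℝ),
      (∫ x, (p x - q x) * k x * ⟪a + b, tilde x⟫)
        = (∫ x, (p x - q x) * k x * ⟪a, tilde x⟫)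
          + ∫ x, (p x - q x) * k x * ⟪b, tilde x⟫ := by
    intro a b
    rw [← integral_add (hIL a) (hIL b)]
    refine integral_congr_ae (Filter.Eventually.of_forall fun x => ?_)
    simp only [Pi.add_apply, inner_add_left]; ring
  have hLsmul : ∀ (c : ℝ) (a : WithLp 2 (EuclideanSpace ℝ (Fin d) × ℝ)),
      (∫ x, (p x - q x) * k x * ⟪c • a, tilde x⟫)
        = c * ∫ x, (p x - q x) * k x * ⟪a, tilde x⟫ := by
    intro c a
    rw [← integral_const_mul]
    refine integral_congr_ae (Filter.Eventually.of_forall fun x => ?_)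
    simp only [real_inner_smul_left]; ring
  obtain ⟨Lf, hLf⟩ : ∃ Lf : WithLp 2 (EuclideanSpace ℝ (Fin d) × ℝ) →ₗ[ℝ] ℝ,
      ∀ θ, Lf θ = ∫ x, (p x - q x) * k x * ⟪θ, tilde x⟫ :=
    ⟨{ toFun := fun θ => ∫ x, (p x - q x) * k x * ⟪θ, tilde x⟫,
       map_add' := hLadd, map_smul' := hLsmul }, fun θ => rfl⟩
  haveI : ContinuousSMul ℝ (WithLp 2 (EuclideanSpace ℝ (Fin d) × ℝ)) := IsBoundedSMul.continuousSMul
  obtain ⟨T, hT⟩ : ∃ T : WithLp 2 (EuclideanSpace ℝ (Fin d) × ℝ) →ₗ[ℝ]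
      WithLp 2 (EuclideanSpace ℝ (Fin d) × ℝ), ∀ θ η, ⟪T θ, η⟫ = Q θ η := by
    refine ⟨{ toFun := fun θ => (InnerProductSpace.toDual ℝ _).symm
                (LinearMap.toContinuousLinearMap (Q θ)),
              map_add' := fun a b => ?_, map_smul' := fun c a => ?_ }, fun θ η => ?_⟩
    · simp [map_add]
    · simp [_root_.map_smul]
    · simp [InnerProductSpace.toDual_symm_apply]
  obtain ⟨lvec, hlvec⟩ : ∃ lvec : WithLp 2 (EuclideanSpace ℝ (Fin d) × ℝ),
      ∀ η, ⟪lvec, η⟫ = Lf η :=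
    ⟨(InnerProductSpace.toDual ℝ _).symm (LinearMap.toContinuousLinearMap Lf), fun η => by
      simp [InnerProductSpace.toDual_symm_apply]⟩
  -- positivity facts
  have hκ0 : 0 ≤ κ := le_trans (norm_nonneg _) (hκ xstar)
  have hk0 : ∀ x, 0 ≤ k x := fun x => by rw [hk]; positivity
  have hCk0 : 0 ≤ Ck := le_trans (integral_nonneg fun y => mul_nonneg (mul_nonneg
    (mul_nonneg (hq0 _) (Real.exp_nonneg _)) (sq_nonneg _)) (norm_nonneg _)) hmom
  have hσd : (0:ℝ) < σ ^ d := pow_pos hσ d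
  -- lower bound for Q
  have hQpos : ∀ η, σ ^ d * Λ * ‖η‖ ^ 2 ≤ Q η η := by
    intro η
    rw [hQ]
    refine le_trans (heig η) (le_of_eq ?_)
    refine integral_congr_ae (Filter.Eventually.of_forall fun x => ?_)
    ring
  have hkey0 : ∀ v : WithLp 2 (EuclideanSpace ℝ (Fin d) × ℝ),
      σ ^ d * Λ * ‖v‖ ^ 2 ≤ 0 → v = 0 := by
    intro v hv
    have h1 : ‖v‖ ^ 2 ≤ 0 := by
      by_contra hc
      push_neg at hc
      nlinarith [mul_pos (mul_pos hσd hΛ) hc]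
    have h2 : ‖v‖ ^ 2 = 0 := le_antisymm h1 (sq_nonneg _)
    have h3 : ‖v‖ = 0 := by
      have := sq_eq_zero_iff.mp h2
      exact this
    exact norm_eq_zero.mp h3
  -- construct the minimizer
  have hTinj : Function.Injective T := by
    intro a b hab
    have h0 : T (a - b) = 0 := by rw [map_sub, hab, sub_self]
    have h1 : Q (a - b) (a - b) = 0 := by rw [← hT, h0, inner_zero_left]
    have h2 := hQpos (a - b)
    rw [h1] at h2
    exact sub_eq_zero.mp (hkey0 (a - b) (h1 ▸ h2))
  obtain ⟨θ₀, hθ₀⟩ := (LinearMap.injective_iff_surjective_of_finrank_eq_finrank rfl).mp hTinj lvec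
  have hsol : ∀ η, Q θ₀ η = Lf η := fun η => by rw [← hT, hθ₀, hlvec]
  -- closed form for ℓ
  have hℓ' : ∀ θ : WithLp 2 (EuclideanSpace ℝ (Fin d) × ℝ),
      ℓ θ = (∫ x, q x * k x * (⟪θ, tilde x⟫ * ⟪θ, tilde x⟫)) / 2 - Lf θ := by
    intro θ
    have h1 := hℓ θ.fst θ.snd
    have h0 : (WithLp.equiv 2 (EuclideanSpace ℝ (Fin d) × ℝ)).symm (θ.fst, θ.snd) = θ := rfl
    rw [h0] at h1
    rw [h1, hLf]
    have e1 : (∫ x, p x * k x * (⟪θ.fst, x⟫ + θ.snd)) = ∫ x, p x * k x * ⟪θ, tilde x⟫ :=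
      integral_congr_ae (Filter.Eventually.of_forall fun x => by simp only [hsE])
    have e2 : (∫ x, q x * k x * ((⟪θ.fst, x⟫ + θ.snd) ^ 2 / 2 + (⟪θ.fst, x⟫ + θ.snd)))
        = (∫ x, q x * k x * (⟪θ, tilde x⟫ * ⟪θ, tilde x⟫)) / 2
          + ∫ x, q x * k x * ⟪θ, tilde x⟫ := by
      rw [← integral_div, ← integral_add ((hIprod θ θ).div_const 2) (hIqs θ)]
      refine integral_congr_ae (Filter.Eventually.of_forall fun x => ?_)
      simp only [Pi.add_apply, hsE]; ring
    have e3 : (∫ x, (p x - q x) * k x * ⟪θ, tilde x⟫)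
        = (∫ x, p x * k x * ⟪θ, tilde x⟫) - ∫ x, q x * k x * ⟪θ, tilde x⟫ := by
      rw [← integral_sub (hIps θ) (hIqs θ)]
      refine integral_congr_ae (Filter.Eventually.of_forall fun x => ?_)
      simp only [Pi.sub_apply]; ring
    rw [e1, e2, e3]; ring
  have hℓQ : ∀ θ : WithLp 2 (EuclideanSpace ℝ (Fin d) × ℝ), ℓ θ = Q θ θ / 2 - Lf θ := by
    intro θ; rw [hℓ' θ, hQ]
  -- quadratic expansion around θ₀
  have hquad : ∀ θ, ℓ θ = ℓ θ₀ + Q (θ - θ₀) (θ - θ₀) / 2 := by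
    intro θ
    have e : θ = θ₀ + (θ - θ₀) := by abel
    rw [hℓQ θ, hℓQ θ₀]
    conv_lhs => rw [e]
    simp only [map_add, LinearMap.add_apply]
    have hsymm : Q (θ - θ₀) θ₀ = Q θ₀ (θ - θ₀) := by rw [hQ, hQ, hQsym]
    rw [hsymm]
    linarith [hsol (θ - θ₀)]
  have hmin : ∀ θ, ℓ θ₀ ≤ ℓ θ := by
    intro θ
    rw [hquad θ]
    nlinarith [hQpos (θ - θ₀), sq_nonneg ‖θ - θ₀‖, mul_pos hσd hΛ, norm_nonneg (θ - θ₀),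
      mul_nonneg (mul_nonneg hσd.le hΛ.le) (sq_nonneg ‖θ - θ₀‖)]
  have huniq : ∀ θ', (∀ θ, ℓ θ' ≤ ℓ θ) → θ' = θ₀ := by
    intro θ' hθ'
    have h1 := hθ' θ₀
    have h2 := hquad θ'
    have h3 := hQpos (θ' - θ₀)
    exact sub_eq_zero.mp (hkey0 (θ' - θ₀) (by linarith))
  -- the comparison point
  obtain ⟨θs, hθs1, hθs2⟩ : ∃ θs : WithLp 2 (EuclideanSpace ℝ (Fin d) × ℝ),
      θs.fst = gradient r xstar ∧ θs.snd = r xstar - 1 - ⟪gradient r xstar, xstar⟫ :=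
    ⟨(WithLp.equiv 2 (EuclideanSpace ℝ (Fin d) × ℝ)).symm
      (gradient r xstar, r xstar - 1 - ⟪gradient r xstar, xstar⟫), rfl, rfl⟩
  have hRbound : ∀ x, |r x - r xstar - ⟪gradient r xstar, x - xstar⟫| ≤ κ * ‖x - xstar‖ ^ 2 :=
    fun x => taylor_aux r hrC2 κ hκ xstar x
  have hptw : ∀ (η : WithLp 2 (EuclideanSpace ℝ (Fin d) × ℝ)) (x),
      (p x - q x) * k x * ⟪η, tilde x⟫ - q x * k x * (⟪θs, tilde x⟫ * ⟪η, tilde x⟫)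
        = q x * k x * ((r x - r xstar - ⟪gradient r xstar, x - xstar⟫) * ⟪η, tilde x⟫) := by
    intro η x
    rw [hp x, hsE θs x, hθs1, hθs2, inner_sub_right]
    ring
  have hIR : ∀ η : WithLp 2 (EuclideanSpace ℝ (Fin d) × ℝ),
      Integrable fun x => q x * k x
        * ((r x - r xstar - ⟪gradient r xstar, x - xstar⟫) * ⟪η, tilde x⟫) := by
    intro η
    refine ((hIL η).sub (hIprod θs η)).congr (Filter.Eventually.of_forall fun x => ?_)
    simp only [Pi.sub_apply]
    exact hptw η x
  have hQδ : ∀ η, Q (θ₀ - θs) η = ∫ x, q x * k x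
      * ((r x - r xstar - ⟪gradient r xstar, x - xstar⟫) * ⟪η, tilde x⟫) := by
    intro η
    have h1 : Q (θ₀ - θs) η = Lf η - Q θs η := by
      rw [map_sub, LinearMap.sub_apply, hsol]
    rw [h1, hLf, hQ, ← integral_sub (hIL η) (hIprod θs η)]
    refine integral_congr_ae (Filter.Eventually.of_forall fun x => ?_)
    simp only [Pi.sub_apply]
    exact hptw η x
  -- change of variables for the moment integral
  have hfσ : ∀ y : EuclideanSpace ℝ (Fin d),
      q (xstar + σ • y) * k (xstar + σ • y)
        * (‖(xstar + σ • y) - xstar‖ ^ 2 * ‖tilde (xstar + σ • y)‖)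
      = σ ^ 2 * (q (xstar + σ • y) * Real.exp (-‖y‖ ^ 2 / 2) * ‖y‖ ^ 2
          * ‖tilde (xstar + σ • y)‖) := by
    intro y
    have h1 : (xstar + σ • y) - xstar = σ • y := by abel
    rw [hk, h1]
    have h2 : ‖σ • y‖ ^ 2 = σ ^ 2 * ‖y‖ ^ 2 := by
      rw [norm_smul, Real.norm_eq_abs, mul_pow, sq_abs]
    rw [h2]
    have h3 : -(σ ^ 2 * ‖y‖ ^ 2) / (2 * σ ^ 2) = -‖y‖ ^ 2 / 2 := by
      have : σ ^ 2 ≠ 0 := by positivity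
      field_simp
    rw [h3]
    ring
  have hIf : Integrable fun x => q x * k x * (‖x - xstar‖ ^ 2 * ‖tilde x‖) := by
    have h1 : Integrable (fun y : EuclideanSpace ℝ (Fin d) =>
        q (xstar + σ • y) * k (xstar + σ • y)
          * (‖(xstar + σ • y) - xstar‖ ^ 2 * ‖tilde (xstar + σ • y)‖)) :=
      (hImom.const_mul (σ ^ 2)).congr (Filter.Eventually.of_forall fun y => (hfσ y).symm)
    have h2 : Integrable (fun y : EuclideanSpace ℝ (Fin d) =>
        q (xstar + y) * k (xstar + y)
          * (‖(xstar + y) - xstar‖ ^ 2 * ‖tilde (xstar + y)‖)) :=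
      (integrable_comp_smul_iff volume (fun y : EuclideanSpace ℝ (Fin d) =>
        q (xstar + y) * k (xstar + y)
          * (‖(xstar + y) - xstar‖ ^ 2 * ‖tilde (xstar + y)‖)) hσ.ne').mp h1
    have h3 := h2.comp_add_left (-xstar)
    refine h3.congr (Filter.Eventually.of_forall fun t => ?_)
    simp only [add_neg_cancel_left]
  have hval : (∫ x, q x * k x * (‖x - xstar‖ ^ 2 * ‖tilde x‖)) ≤ σ ^ d * σ ^ 2 * Ck := by
    have h1 : (∫ y : EuclideanSpace ℝ (Fin d),
        q (xstar + σ • y) * k (xstar + σ • y)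
          * (‖(xstar + σ • y) - xstar‖ ^ 2 * ‖tilde (xstar + σ • y)‖))
        = σ ^ 2 * ∫ y : EuclideanSpace ℝ (Fin d),
            q (xstar + σ • y) * Real.exp (-‖y‖ ^ 2 / 2) * ‖y‖ ^ 2
              * ‖tilde (xstar + σ • y)‖ := by
      rw [← integral_const_mul]
      exact integral_congr_ae (Filter.Eventually.of_forall hfσ)
    have h2 : (∫ y : EuclideanSpace ℝ (Fin d),
        q (xstar + σ • y) * k (xstar + σ • y)
          * (‖(xstar + σ • y) - xstar‖ ^ 2 * ‖tilde (xstar + σ • y)‖))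
        = (σ ^ d)⁻¹ * ∫ y : EuclideanSpace ℝ (Fin d),
            q (xstar + y) * k (xstar + y)
              * (‖(xstar + y) - xstar‖ ^ 2 * ‖tilde (xstar + y)‖) := by
      have := Measure.integral_comp_smul_of_nonneg (volume)
        (fun y : EuclideanSpace ℝ (Fin d) => q (xstar + y) * k (xstar + y)
          * (‖(xstar + y) - xstar‖ ^ 2 * ‖tilde (xstar + y)‖)) σ (hR := hσ.le)
      simpa [finrank_euclideanSpace_fin, smul_eq_mul] using this
    have h3 : (∫ y : EuclideanSpace ℝ (Fin d),
        q (xstar + y) * k (xstar + y)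
          * (‖(xstar + y) - xstar‖ ^ 2 * ‖tilde (xstar + y)‖))
        = ∫ x, q x * k x * (‖x - xstar‖ ^ 2 * ‖tilde x‖) := by
      exact integral_add_left_eq_self
        (fun x => q x * k x * (‖x - xstar‖ ^ 2 * ‖tilde x‖)) xstar
    have h4 : (∫ x, q x * k x * (‖x - xstar‖ ^ 2 * ‖tilde x‖))
        = σ ^ d * (σ ^ 2 * ∫ y : EuclideanSpace ℝ (Fin d),
            q (xstar + σ • y) * Real.exp (-‖y‖ ^ 2 / 2) * ‖y‖ ^ 2
              * ‖tilde (xstar + σ • y)‖) := by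
      rw [← h1, h2, ← h3]
      field_simp
    rw [h4]
    calc σ ^ d * (σ ^ 2 * ∫ y : EuclideanSpace ℝ (Fin d),
            q (xstar + σ • y) * Real.exp (-‖y‖ ^ 2 / 2) * ‖y‖ ^ 2
              * ‖tilde (xstar + σ • y)‖)
        = (σ ^ d * σ ^ 2) * ∫ y : EuclideanSpace ℝ (Fin d),
            q (xstar + σ • y) * Real.exp (-‖y‖ ^ 2 / 2) * ‖y‖ ^ 2
              * ‖tilde (xstar + σ • y)‖ := by ring
      _ ≤ (σ ^ d * σ ^ 2) * Ck := mul_le_mul_of_nonneg_left hmom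
            (mul_nonneg hσd.le (sq_nonneg σ))
      _ = σ ^ d * σ ^ 2 * Ck := by ring
  -- final bound on the quadratic form
  have hBδ : Q (θ₀ - θs) (θ₀ - θs) ≤ κ * ‖θ₀ - θs‖ * (σ ^ d * σ ^ 2 * Ck) := by
    rw [hQδ (θ₀ - θs)]
    have step : (∫ x, q x * k x
        * ((r x - r xstar - ⟪gradient r xstar, x - xstar⟫) * ⟪θ₀ - θs, tilde x⟫))
        ≤ ∫ x, κ * ‖θ₀ - θs‖ * (q x * k x * (‖x - xstar‖ ^ 2 * ‖tilde x‖)) := by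
      refine integral_mono (hIR (θ₀ - θs)) (hIf.const_mul _) ?_
      intro x
      have h1 := hRbound x
      have h2 : |(⟪θ₀ - θs, tilde x⟫ : ℝ)| ≤ ‖θ₀ - θs‖ * ‖tilde x‖ :=
        abs_real_inner_le_norm _ _
      have h3 : 0 ≤ q x * k x := mul_nonneg (hq0 x) (hk0 x)
      have h4 : (r x - r xstar - ⟪gradient r xstar, x - xstar⟫) * ⟪θ₀ - θs, tilde x⟫
          ≤ (κ * ‖x - xstar‖ ^ 2) * (‖θ₀ - θs‖ * ‖tilde x‖) := by
        calc (r x - r xstar - ⟪gradient r xstar, x - xstar⟫) * ⟪θ₀ - θs, tilde x⟫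
            ≤ |(r x - r xstar - ⟪gradient r xstar, x - xstar⟫) * ⟪θ₀ - θs, tilde x⟫| :=
              le_abs_self _
          _ = |r x - r xstar - ⟪gradient r xstar, x - xstar⟫| * |(⟪θ₀ - θs, tilde x⟫ : ℝ)| :=
              abs_mul _ _
          _ ≤ (κ * ‖x - xstar‖ ^ 2) * (‖θ₀ - θs‖ * ‖tilde x‖) :=
              mul_le_mul h1 h2 (abs_nonneg _) (mul_nonneg hκ0 (sq_nonneg _))
      calc q x * k x * ((r x - r xstar - ⟪gradient r xstar, x - xstar⟫) * ⟪θ₀ - θs, tilde x⟫)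
          ≤ q x * k x * ((κ * ‖x - xstar‖ ^ 2) * (‖θ₀ - θs‖ * ‖tilde x‖)) :=
            mul_le_mul_of_nonneg_left h4 h3
        _ = κ * ‖θ₀ - θs‖ * (q x * k x * (‖x - xstar‖ ^ 2 * ‖tilde x‖)) := by ring
    refine le_trans step ?_
    rw [integral_const_mul]
    exact mul_le_mul_of_nonneg_left hval (mul_nonneg hκ0 (norm_nonneg _))
  have hδle : ‖θ₀ - θs‖ ≤ κ * Ck * σ ^ 2 / Λ := by
    have hlow := hQpos (θ₀ - θs)
    rcases eq_or_lt_of_le (norm_nonneg (θ₀ - θs)) with h0 | h0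
    · rw [← h0]; positivity
    · rw [le_div_iff₀ hΛ]
      nlinarith [mul_pos hσd h0]
  refine ⟨θ₀, hmin, huniq, ?_⟩
  have hfst : ‖((WithLp.equiv 2 (EuclideanSpace ℝ (Fin d) × ℝ)) θ₀).1 - gradient r xstar‖
      ≤ ‖θ₀ - θs‖ := by
    have h1 : (θ₀ - θs).fst = ((WithLp.equiv 2 (EuclideanSpace ℝ (Fin d) × ℝ)) θ₀).1
        - gradient r xstar := by
      rw [← hθs1]; rfl
    have h2 := WithLp.prod_norm_sq_eq_of_L2 (θ₀ - θs)
    rw [← h1]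
    nlinarith [norm_nonneg (θ₀ - θs), norm_nonneg (θ₀ - θs).fst, sq_nonneg ‖(θ₀ - θs).snd‖]
  exact le_trans hfst hδle
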